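/- arXiv:2502.09995 — 2 statements merged into one kernel-verified Lean document; each statement's English description precedes it below -/
import Mathlib

section
/- Let T ⊆ ℕ* be a finitely branching rooted tree in which every node has at least two successors, and let S ⊆ T be a subtree without leaves that is level-wise uniformly branching. For every real r with 0 < r < liminf_{n→∞} log|S_n|/log|T_n|, the r-dimensional Hausdorff (outer) measure of [S] in the ultrametric space [T] is at least 1. -/
/-! Write `M n = |S_n|` and `L n = |T_n|`, and give a node `σ` of `S` the weight `1 / M |σ|`.
Uniform branching makes the weight of `σ` the total weight of its descendants at any deeper
level, so by König's lemma every cover of `[S]` by cylinders has total weight at least `1`.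
Eventually `L n ^ r ≤ M n`; a set of small diameter `d` meets `[S]` inside a single cylinder of
the first level `n` with `1 / L n ≤ d`, whose weight is `1 / M n ≤ (1 / L n) ^ r ≤ d ^ r`. -/

open Filter MeasureTheory

namespace FractalTree

/-- The `n`-th level of a tree `T ⊆ ℕ*`: the strings in `T` of length `n`. -/
def level (T : Set (List ℕ)) (n : ℕ) : Set (List ℕ) := {σ | σ ∈ T ∧ σ.length = n}

/-- A tree is a nonempty set of finite sequences closed under initial segments. -/
def IsTree (T : Set (List ℕ)) : Prop :=
  T.Nonempty ∧ ∀ σ ∈ T, ∀ τ : List ℕ, τ <+: σ → τ ∈ T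

/-- The immediate successors of a node `σ` in `T`. -/
def succs (T : Set (List ℕ)) (σ : List ℕ) : Set ℕ := {a | σ ++ [a] ∈ T}

/-- Every node of `T` has finitely many immediate successors. -/
def FinBranching (T : Set (List ℕ)) : Prop := ∀ σ ∈ T, (succs T σ).Finite

/-- Every node of `T` has at least two immediate successors. -/
def AtLeastTwo (T : Set (List ℕ)) : Prop :=
  ∀ σ ∈ T, ∃ a b : ℕ, a ≠ b ∧ a ∈ succs T σ ∧ b ∈ succs T σ

/-- Every node of `S` has at least one immediate successor (no leaves). -/
def NoLeaves (S : Set (List ℕ)) : Prop := ∀ σ ∈ S, ∃ a : ℕ, a ∈ succs S σ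

/-- `S` is level-wise uniformly branching: the number of immediate successors of a node
only depends on its level. -/
def UnifBranching (S : Set (List ℕ)) : Prop :=
  ∀ n : ℕ, ∀ σ ∈ level S n, ∀ τ ∈ level S n, (succs S σ).ncard = (succs S τ).ncard

/-- The initial segment of length `n` of an infinite sequence `f`. -/
def seg (f : ℕ → ℕ) (n : ℕ) : List ℕ := (List.range n).map f

/-- The set `[T]` of infinite paths through `T`. -/
def paths (T : Set (List ℕ)) : Set (ℕ → ℕ) := {f | ∀ n : ℕ, seg f n ∈ T}

open Classical in
/-- The ultrametric on `[T]`: `d(f,g) = 1/|T_n|` where `n` is the least index with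
`f n ≠ g n`, and `d(f,f) = 0`. -/
noncomputable def treeDist (T : Set (List ℕ)) (f g : ℕ → ℕ) : ℝ :=
  if h : ∃ n, f n ≠ g n then 1 / ((level T (Nat.find h)).ncard : ℝ) else 0


open scoped ENNReal Topology

variable {T S : Set (List ℕ)}

@[simp] lemma seg_length (f : ℕ → ℕ) (n : ℕ) : (seg f n).length = n := by
  simp [seg]

lemma seg_succ (f : ℕ → ℕ) (n : ℕ) : seg f (n + 1) = seg f n ++ [f n] := by
  simp [seg, List.range_succ]

lemma seg_eq_seg_iff {f g : ℕ → ℕ} {n : ℕ} : seg f n = seg g n ↔ ∀ j < n, f j = g j := by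
  rw [seg, seg, List.map_inj_left]
  simp

lemma exists_seg_eq_of_take_eq (ℓ : ℕ → List ℕ) (hlen : ∀ n, (ℓ n).length = n)
    (htake : ∀ n, (ℓ (n + 1)).take n = ℓ n) : ∃ g : ℕ → ℕ, ∀ n, seg g n = ℓ n := by
  refine ⟨fun n => (ℓ (n + 1)).getD n 0, fun n => ?_⟩
  induction n with
  | zero => simpa [seg] using (List.length_eq_zero_iff.mp (hlen 0)).symm
  | succ n ih =>
    have hl : n < (ℓ (n + 1)).length := by simp [hlen]
    rw [seg_succ, ih, ← htake n, List.getD_eq_getElem _ _ hl, ← List.take_succ_eq_append_getElem hl,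
      List.take_of_length_le (hlen _).le]

lemma IsTree.nil_mem (hT : IsTree T) : [] ∈ T := by
  obtain ⟨⟨σ, hσ⟩, hcl⟩ := hT
  exact hcl σ hσ [] List.nil_prefix

lemma IsTree.take_mem_level (hT : IsTree T) {τ : List ℕ} {n N : ℕ} (hτ : τ ∈ level T N)
    (h : n ≤ N) : τ.take n ∈ level T n :=
  ⟨hT.2 τ hτ.1 _ (List.take_prefix _ _), by simp [hτ.2, h]⟩

lemma FinBranching.mono (hT : FinBranching T) (hST : S ⊆ T) : FinBranching S :=
  fun σ hσ => (hT σ (hST hσ)).subset fun _ ha => hST ha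

lemma level_nonempty (hT : IsTree T) (hTnl : NoLeaves T) (n : ℕ) : (level T n).Nonempty := by
  induction n with
  | zero => exact ⟨[], hT.nil_mem, rfl⟩
  | succ n ih =>
    obtain ⟨σ, hσT, hσn⟩ := ih
    obtain ⟨a, ha⟩ := hTnl σ hσT
    exact ⟨σ ++ [a], ha, by simp [hσn]⟩

def descendants (T : Set (List ℕ)) (σ : List ℕ) (N : ℕ) : Set (List ℕ) :=
  {τ | τ ∈ level T N ∧ σ <+: τ}

lemma descendants_subset_level (σ : List ℕ) (N : ℕ) : descendants T σ N ⊆ level T N :=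
  fun _ hτ => hτ.1

lemma descendants_nil (N : ℕ) : descendants T [] N = level T N := by
  simp [descendants]

lemma descendants_length {σ : List ℕ} (hσ : σ ∈ T) : descendants T σ σ.length = {σ} := by
  ext τ
  refine ⟨fun ⟨⟨_, hlen⟩, hστ⟩ => (hστ.eq_of_length hlen.symm).symm, ?_⟩
  rintro rfl
  exact ⟨⟨hσ, rfl⟩, List.prefix_refl _⟩

lemma descendants_succ (hT : IsTree T) {σ : List ℕ} {N : ℕ} (h : σ.length ≤ N) :
    descendants T σ (N + 1) = ⋃ θ ∈ descendants T σ N, (fun a => θ ++ [a]) '' succs T θ := by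
  ext τ
  simp only [Set.mem_iUnion, Set.mem_image, exists_prop]
  constructor
  · rintro ⟨⟨hτT, hlen⟩, hστ⟩
    have hne : τ ≠ [] := by rintro rfl; simp at hlen
    have hsplit := List.dropLast_append_getLast hne
    have hθ : τ.dropLast <+: τ := ⟨_, hsplit⟩
    refine ⟨τ.dropLast, ⟨⟨hT.2 τ hτT _ hθ, by simp [hlen]⟩, ?_⟩, τ.getLast hne, ?_, hsplit⟩
    · exact List.prefix_of_prefix_length_le hστ hθ (by simpa [hlen] using h)
    · rwa [succs, Set.mem_ofPred_eq, hsplit]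
  · rintro ⟨θ, ⟨⟨-, hlen⟩, hσθ⟩, a, ha, rfl⟩
    exact ⟨⟨ha, by simp [hlen]⟩, hσθ.trans (List.prefix_append _ _)⟩

lemma level_finite (hT : IsTree T) (hTfin : FinBranching T) (n : ℕ) : (level T n).Finite := by
  induction n with
  | zero =>
    refine (Set.finite_singleton []).subset fun τ ⟨_, hlen⟩ => ?_
    simpa using hlen
  | succ n ih =>
    rw [← descendants_nil, descendants_succ hT (Nat.zero_le n), descendants_nil]
    exact ih.biUnion fun θ hθ => (hTfin θ hθ.1).image _

lemma ncard_descendants_succ (hT : IsTree T) (hTfin : FinBranching T) {σ : List ℕ} {N : ℕ}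
    (h : σ.length ≤ N) :
    (descendants T σ (N + 1)).ncard = ∑ᶠ θ ∈ descendants T σ N, (succs T θ).ncard := by
  have hfin := (level_finite hT hTfin N).subset (descendants_subset_level σ N)
  rw [descendants_succ hT h, hfin.ncard_biUnion (fun θ hθ => (hTfin θ hθ.1.1).image _)]
  · refine finsum_mem_congr rfl fun θ _ => Set.InjOn.ncard_image fun a _ b _ hab => ?_
    simpa using hab
  · rintro θ ⟨⟨-, hθ⟩, -⟩ θ' ⟨⟨-, hθ'⟩, -⟩ hne
    refine Set.disjoint_left.mpr ?_
    rintro _ ⟨a, -, rfl⟩ ⟨b, -, hab⟩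
    exact hne (List.append_inj hab (hθ'.trans hθ.symm)).1.symm

lemma UnifBranching.exists_ncard_succs_eq (hS : UnifBranching S) (N : ℕ) :
    ∃ b, ∀ θ ∈ level S N, (succs S θ).ncard = b := by
  rcases (level S N).eq_empty_or_nonempty with h | ⟨θ₀, hθ₀⟩
  · exact ⟨0, by simp [h]⟩
  · exact ⟨_, fun θ hθ => hS N θ hθ θ₀ hθ₀⟩

lemma ncard_level_mul_ncard_descendants (hS : IsTree S) (hSfin : FinBranching S)
    (hSub : UnifBranching S) {σ : List ℕ} (hσ : σ ∈ S) {N : ℕ} (h : σ.length ≤ N) :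
    (level S σ.length).ncard * (descendants S σ N).ncard = (level S N).ncard := by
  induction N, h using Nat.le_induction with
  | base => rw [descendants_length hσ, Set.ncard_singleton, mul_one]
  | succ N hN ih =>
    obtain ⟨b, hb⟩ := hSub.exists_ncard_succs_eq N
    have step : ∀ ρ : List ℕ, ρ.length ≤ N →
        (descendants S ρ (N + 1)).ncard = (descendants S ρ N).ncard * b := by
      intro ρ hρ
      rw [ncard_descendants_succ hS hSfin hρ, finsum_mem_congr rfl fun θ hθ => hb θ hθ.1,
        ← finsum_one, finsum_mem_mul, one_mul]
    have hlevel := step [] (Nat.zero_le N)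
    rw [descendants_nil, descendants_nil] at hlevel
    rw [step σ hN, hlevel, ← ih, mul_assoc]

def cylinder (σ : List ℕ) : Set (ℕ → ℕ) := {f | seg f σ.length = σ}

/-- König's lemma for covers of `[S]` by cylinders. -/
lemma exists_level_forall_prefix (hS : IsTree S) (hSfin : FinBranching S) {ι : Type*}
    (σ : ι → List ℕ) (hcov : paths S ⊆ ⋃ i, cylinder (σ i)) :
    ∃ N, ∀ τ ∈ level S N, ∃ i, σ i <+: τ := by
  by_contra! hbad
  let Bad : ℕ → Set (List ℕ) := fun N => {τ | τ ∈ level S N ∧ ∀ i, ¬σ i <+: τ}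
  have hfin : ∀ N, Finite (Bad N) := fun N =>
    ((level_finite hS hSfin N).subset fun _ h => h.1).to_subtype
  have hne : ∀ N, Nonempty (Bad N) := fun N =>
    let ⟨τ, hτ⟩ := hbad N
    ⟨⟨τ, hτ⟩⟩
  have hproj {n N : ℕ} (h : n ≤ N) (τ : Bad N) : τ.1.take n ∈ Bad n :=
    ⟨hS.take_mem_level τ.2.1 h, fun i hi => τ.2.2 i (hi.trans (List.take_prefix _ _))⟩
  obtain ⟨ℓ, hℓ⟩ := exists_seq_forall_proj_of_forall_finite (α := fun N => Bad N)
    (fun h τ => ⟨_, hproj h τ⟩) (fun _ τ => Subtype.ext (List.take_of_length_le τ.2.1.2.le))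
    (fun _ _ _ h _ _ => Subtype.ext (by simp [List.take_take, h])) (fun _ _ => Set.toFinite _)
  obtain ⟨g, hg⟩ := exists_seg_eq_of_take_eq (fun N => (ℓ N).1) (fun N => (ℓ N).2.1.2)
    (fun N => congrArg Subtype.val (hℓ N.le_succ))
  obtain ⟨i, hi⟩ := Set.mem_iUnion.mp (hcov fun n => hg n ▸ (ℓ n).2.1.1)
  exact (ℓ _).2.2 i (by rw [← hg, hi])

lemma ncard_descendants_mul_inv_le (hS : IsTree S) (hSfin : FinBranching S)
    (hSub : UnifBranching S) {σ : List ℕ} (hσ : σ ∈ S) (N : ℕ) :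
    ((descendants S σ N).ncard : ℝ≥0∞) * ((level S N).ncard : ℝ≥0∞)⁻¹ ≤
      ((level S σ.length).ncard : ℝ≥0∞)⁻¹ := by
  rcases le_or_gt σ.length N with h | h
  · have hpos : (level S σ.length).ncard ≠ 0 :=
      ((Set.ncard_pos (level_finite hS hSfin _)).mpr ⟨σ, hσ, rfl⟩).ne'
    rw [← ncard_level_mul_ncard_descendants hS hSfin hSub hσ h, ← div_eq_mul_inv]
    refine ENNReal.div_le_of_le_mul ?_
    push_cast
    rw [ENNReal.inv_mul_cancel_left (by exact_mod_cast hpos) (ENNReal.natCast_ne_top _)]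
  · have hempty : descendants S σ N = ∅ :=
      Set.eq_empty_of_forall_notMem fun τ ⟨⟨_, hlen⟩, hστ⟩ => by
        have := hστ.length_le
        omega
    simp [hempty]

theorem one_le_tsum_of_paths_subset_iUnion_cylinder (hS : IsTree S) (hSfin : FinBranching S)
    (hSnl : NoLeaves S) (hSub : UnifBranching S) {ι : Type*} {σ : ι → List ℕ}
    (hσ : ∀ i, σ i ∈ S) (hcov : paths S ⊆ ⋃ i, cylinder (σ i)) :
    1 ≤ ∑' i, ((level S (σ i).length).ncard : ℝ≥0∞)⁻¹ := by
  obtain ⟨N, hN⟩ := exists_level_forall_prefix hS hSfin σ hcov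
  have hfin := level_finite hS hSfin N
  obtain ⟨I, hI, hsub⟩ := Set.finite_subset_iUnion (t := fun i => descendants S (σ i) N) hfin
    fun τ hτ => Set.mem_iUnion.mpr <| (hN τ hτ).imp fun _ hi => ⟨hτ, hi⟩
  lift I to Finset ι using hI
  have hcount : (level S N).ncard ≤ ∑ i ∈ I, (descendants S (σ i) N).ncard :=
    (Set.ncard_le_ncard hsub (hfin.subset (Set.iUnion₂_subset fun _ _ =>
      descendants_subset_level _ _))).trans (I.set_ncard_biUnion_le _)
  have hM : ((level S N).ncard : ℝ≥0∞) ≠ 0 := by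
    simpa using ((Set.ncard_pos hfin).mpr (level_nonempty hS hSnl N)).ne'
  calc 1 = ((level S N).ncard : ℝ≥0∞) * ((level S N).ncard : ℝ≥0∞)⁻¹ :=
        (ENNReal.mul_inv_cancel hM (ENNReal.natCast_ne_top _)).symm
    _ ≤ (∑ i ∈ I, ((descendants S (σ i) N).ncard : ℝ≥0∞)) * ((level S N).ncard : ℝ≥0∞)⁻¹ := by
        gcongr
        exact_mod_cast hcount
    _ = ∑ i ∈ I, ((descendants S (σ i) N).ncard : ℝ≥0∞) * ((level S N).ncard : ℝ≥0∞)⁻¹ :=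
        Finset.sum_mul _ _ _
    _ ≤ ∑ i ∈ I, ((level S (σ i).length).ncard : ℝ≥0∞)⁻¹ :=
        Finset.sum_le_sum fun i _ => ncard_descendants_mul_inv_le hS hSfin hSub (hσ i) N
    _ ≤ ∑' i, ((level S (σ i).length).ncard : ℝ≥0∞)⁻¹ := ENNReal.sum_le_tsum I

lemma AtLeastTwo.noLeaves (hT2 : AtLeastTwo T) : NoLeaves T :=
  fun σ hσ => let ⟨a, _, _, ha, _⟩ := hT2 σ hσ; ⟨a, ha⟩

lemma ncard_level_pos (hT : IsTree T) (hTfin : FinBranching T) (hTnl : NoLeaves T) (n : ℕ) :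
    0 < (level T n).ncard :=
  (Set.ncard_pos (level_finite hT hTfin n)).mpr (level_nonempty hT hTnl n)

lemma two_mul_ncard_level_le (hT : IsTree T) (hTfin : FinBranching T) (hT2 : AtLeastTwo T)
    (n : ℕ) : 2 * (level T n).ncard ≤ (level T (n + 1)).ncard := by
  have hsucc := ncard_descendants_succ hT hTfin (σ := []) (Nat.zero_le n)
  rw [descendants_nil, descendants_nil] at hsucc
  have hfin := level_finite hT hTfin n
  rw [hsucc, finsum_mem_eq_finite_toFinset_sum _ hfin, Set.ncard_eq_toFinset_card _ hfin, mul_comm,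
    ← smul_eq_mul, ← Finset.sum_const]
  refine Finset.sum_le_sum fun θ hθ => ?_
  rw [Set.Finite.mem_toFinset] at hθ
  obtain ⟨a, b, hab, ha, hb⟩ := hT2 θ hθ.1
  calc 2 = ({a, b} : Set ℕ).ncard := (Set.ncard_pair hab).symm
    _ ≤ (succs T θ).ncard := Set.ncard_le_ncard (Set.pair_subset ha hb) (hTfin θ hθ.1)

lemma strictMono_ncard_level (hT : IsTree T) (hTfin : FinBranching T) (hT2 : AtLeastTwo T) :
    StrictMono fun n => (level T n).ncard :=
  strictMono_nat_of_lt_succ fun n => by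
    have := ncard_level_pos hT hTfin hT2.noLeaves n
    have := two_mul_ncard_level_le hT hTfin hT2 n
    omega

lemma seg_eq_of_forall_edist_lt (hT : IsTree T) (hTfin : FinBranching T) {X : Type*}
    [PseudoMetricSpace X] {φ : (ℕ → ℕ) → X}
    (hφ : ∀ f ∈ paths T, ∀ g ∈ paths T, dist (φ f) (φ g) = treeDist T f g)
    {f g : ℕ → ℕ} (hf : f ∈ paths T) (hg : g ∈ paths T) {n : ℕ}
    (h : ∀ k < n, edist (φ f) (φ g) < ((level T k).ncard : ℝ≥0∞)⁻¹) : seg f n = seg g n := by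
  classical
  refine seg_eq_seg_iff.mpr fun j hj => ?_
  by_contra hne
  have hex : ∃ k, f k ≠ g k := ⟨j, hne⟩
  have hpos : 0 < (level T (Nat.find hex)).ncard :=
    (Set.ncard_pos (level_finite hT hTfin _)).mpr ⟨seg f _, hf _, seg_length _ _⟩
  have hlt := h _ ((Nat.find_min' hex hne).trans_lt hj)
  rw [edist_dist, hφ f hf g hg, treeDist, dif_pos hex, one_div,
    ENNReal.ofReal_inv_of_pos (by exact_mod_cast hpos), ENNReal.ofReal_natCast] at hlt
  exact lt_irrefl _ hlt

lemma exists_forall_lt_and_le_rpow_add {a b : ℕ → ℝ≥0∞} (ha : StrictAnti a) {r : ℝ}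
    (hr : 0 ≤ r) {K : ℕ} (hab : ∀ n ≥ K, b n ≤ a n ^ r) (hb : Tendsto b atTop (𝓝 0))
    {c d : ℝ≥0∞} (hc : 0 < c) (hd : d ≤ a K) :
    ∃ n, (∀ k < n, d < a k) ∧ b n ≤ d ^ r + c := by
  classical
  obtain ⟨m, hmc, hKm⟩ := ((hb.eventually (ge_mem_nhds hc)).and (eventually_ge_atTop K)).exists
  -- the first `n` with `a n ≤ d`, cut off at `m` since there may be none (e.g. for `d = 0`)
  have hex : ∃ n, a n ≤ d ∨ m ≤ n := ⟨m, Or.inr le_rfl⟩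
  refine ⟨Nat.find hex, fun k hk => not_le.mp (not_or.mp (Nat.find_min hex hk)).1, ?_⟩
  rcases Nat.find_spec hex with had | hmn
  · have hK : K ≤ Nat.find hex := by
      by_contra! hlt
      exact (ha hlt).not_ge (had.trans hd)
    exact (hab _ hK).trans ((ENNReal.rpow_le_rpow had hr).trans le_self_add)
  · rw [le_antisymm (Nat.find_min' hex (Or.inr le_rfl)) hmn]
    exact hmc.trans le_add_self

lemma exists_cylinder_cover_of_ediam_le (hT : IsTree T) (hTfin : FinBranching T) (hST : S ⊆ T)
    (hS : IsTree S) (hSnl : NoLeaves S) {X : Type*} [PseudoMetricSpace X] {φ : (ℕ → ℕ) → X}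
    (hφ : ∀ f ∈ paths T, ∀ g ∈ paths T, dist (φ f) (φ g) = treeDist T f g)
    (hanti : StrictAnti fun n => ((level T n).ncard : ℝ≥0∞)⁻¹) {r : ℝ} (hr : 0 ≤ r) {K : ℕ}
    (hK : ∀ n ≥ K, ((level S n).ncard : ℝ≥0∞)⁻¹ ≤ ((level T n).ncard : ℝ≥0∞)⁻¹ ^ r)
    (hdeep : Tendsto (fun n => ((level S n).ncard : ℝ≥0∞)⁻¹) atTop (𝓝 0))
    {t : Set X} (ht : Metric.ediam t ≤ ((level T K).ncard : ℝ≥0∞)⁻¹) {c : ℝ≥0∞} (hc : 0 < c) :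
    ∃ σ ∈ S, φ ⁻¹' t ∩ paths S ⊆ cylinder σ ∧
      ((level S σ.length).ncard : ℝ≥0∞)⁻¹ ≤ (⨆ _ : t.Nonempty, Metric.ediam t ^ r) + c := by
  obtain ⟨n, hlt, hle⟩ := exists_forall_lt_and_le_rpow_add hanti hr hK hdeep hc ht
  by_cases hmeet : ∃ f ∈ paths S, φ f ∈ t
  · obtain ⟨f, hfS, hft⟩ := hmeet
    refine ⟨seg f n, hfS n, fun g ⟨hgt, hgS⟩ => ?_, ?_⟩
    · show seg g (seg f n).length = seg f n
      rw [seg_length]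
      exact seg_eq_of_forall_edist_lt hT hTfin hφ (fun k => hST (hgS k)) (fun k => hST (hfS k))
        fun k hk => (Metric.edist_le_ediam_of_mem (x := φ g) hgt hft).trans_lt (hlt k hk)
    · rwa [seg_length, iSup_pos ⟨_, hft⟩]
  · obtain ⟨m, hm⟩ := (hdeep.eventually (ge_mem_nhds hc)).exists
    obtain ⟨σ, hσS, rfl⟩ := level_nonempty hS hSnl m
    exact ⟨σ, hσS, fun g ⟨hgt, hgS⟩ => absurd ⟨g, hgS, hgt⟩ hmeet, hm.trans le_add_self⟩

lemma eventually_rpow_le_of_lt_liminf {u v : ℕ → ℝ} (hu : ∀ᶠ n in atTop, 1 ≤ u n)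
    (hv : ∀ᶠ n in atTop, 1 < v n) {r : ℝ}
    (hr : r < liminf (fun n => Real.log (u n) / Real.log (v n)) atTop) :
    ∀ᶠ n in atTop, v n ^ r ≤ u n := by
  have hbdd : IsBoundedUnder (· ≥ ·) atTop fun n => Real.log (u n) / Real.log (v n) :=
    isBoundedUnder_of_eventually_ge <| (hu.and hv).mono fun n h =>
      div_nonneg (Real.log_nonneg h.1) (Real.log_nonneg h.2.le)
  filter_upwards [eventually_lt_of_lt_liminf hr hbdd, hu, hv] with n hn hun hvn
  rw [lt_div_iff₀ (Real.log_pos hvn)] at hn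
  calc v n ^ r = Real.exp (Real.log (v n) * r) := Real.rpow_def_of_pos (by linarith) r
    _ ≤ Real.exp (Real.log (u n)) := Real.exp_le_exp.mpr (by linarith)
    _ = u n := Real.exp_log (by linarith)

lemma eventually_inv_le_inv_rpow_of_lt_liminf {u v : ℕ → ℕ} (hu : ∀ᶠ n in atTop, 0 < u n)
    (hv : ∀ᶠ n in atTop, 1 < v n) {r : ℝ}
    (hr : r < liminf (fun n => Real.log (u n) / Real.log (v n)) atTop) :
    ∀ᶠ n in atTop, ((u n : ℝ≥0∞))⁻¹ ≤ ((v n : ℝ≥0∞))⁻¹ ^ r := by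
  filter_upwards [eventually_rpow_le_of_lt_liminf (hu.mono fun n h => by exact_mod_cast h)
    (hv.mono fun n h => by exact_mod_cast h) hr, hv] with n hn hvn
  rw [ENNReal.inv_rpow, ENNReal.inv_le_inv, ← ENNReal.ofReal_natCast,
    ENNReal.ofReal_rpow_of_pos (by positivity), ← ENNReal.ofReal_natCast]
  exact ENNReal.ofReal_le_ofReal hn

lemma tendsto_inv_nhds_zero_of_eventually_inv_le_inv_rpow {u v : ℕ → ℕ}
    (hv : Tendsto v atTop atTop) {r : ℝ} (hr : 0 < r)
    (h : ∀ᶠ n in atTop, ((u n : ℝ≥0∞))⁻¹ ≤ ((v n : ℝ≥0∞))⁻¹ ^ r) :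
    Tendsto (fun n => ((u n : ℝ≥0∞))⁻¹) atTop (𝓝 0) := by
  have hvr := (ENNReal.tendsto_inv_nat_nhds_zero.comp hv).ennrpow_const r
  rw [ENNReal.zero_rpow_of_pos hr] at hvr
  exact tendsto_of_tendsto_of_tendsto_of_le_of_le' tendsto_const_nhds hvr
    (.of_forall fun _ => zero_le) h

/-- With `T, S` as before, for every real `r` with
`0 < r < liminf_n log|S_n|/log|T_n|`, the `r`-dimensional Hausdorff measure of `[S]`
in the ultrametric space `[T]` is at least `1`. -/
theorem hausdorff_measure_ge_one
    (T S : Set (List ℕ))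
    (hT : IsTree T) (hTfin : FinBranching T) (hT2 : AtLeastTwo T)
    (hST : S ⊆ T) (hS : IsTree S) (hSnl : NoLeaves S) (hSub : UnifBranching S)
    {X : Type*} [MetricSpace X] [MeasurableSpace X] [BorelSpace X]
    (φ : (ℕ → ℕ) → X)
    (hφ : ∀ f ∈ paths T, ∀ g ∈ paths T, dist (φ f) (φ g) = treeDist T f g)
    (r : ℝ) (hr0 : 0 < r)
    (hr : r < Filter.liminf
        (fun n : ℕ => Real.log ((level S n).ncard) / Real.log ((level T n).ncard))
        Filter.atTop) :
    1 ≤ μH[r] (φ '' paths S) := by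
  have hSfin := hTfin.mono hST
  have hLmono := strictMono_ncard_level hT hTfin hT2
  have hanti : StrictAnti fun n => ((level T n).ncard : ℝ≥0∞)⁻¹ :=
    fun m n h => ENNReal.inv_lt_inv.2 (by exact_mod_cast hLmono h)
  have hMT := eventually_inv_le_inv_rpow_of_lt_liminf
    (.of_forall (ncard_level_pos hS hSfin hSnl)) (hLmono.tendsto_atTop.eventually_gt_atTop 1) hr
  have hdeep := tendsto_inv_nhds_zero_of_eventually_inv_le_inv_rpow hLmono.tendsto_atTop hr0 hMT
  obtain ⟨K, hK⟩ := eventually_atTop.mp hMT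
  rw [Measure.hausdorffMeasure_apply]
  refine le_iSup₂_of_le _ (ENNReal.inv_pos.2 (ENNReal.natCast_ne_top (level T K).ncard))
    (le_iInf₂ fun t hcov => le_iInf fun hdiam => ENNReal.le_of_forall_pos_le_add fun δ hδ _ => ?_)
  obtain ⟨c, hc, hcδ⟩ := ENNReal.exists_pos_sum_of_countable (ENNReal.coe_ne_zero.2 hδ.ne') ℕ
  choose σ hσS hσt hσw using fun i => exists_cylinder_cover_of_ediam_le hT hTfin hST hS hSnl hφ
    hanti hr0.le hK hdeep (hdiam i) (ENNReal.coe_pos.2 (hc i))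
  have hσcov : paths S ⊆ ⋃ i, cylinder (σ i) := fun f hf =>
    let ⟨i, hi⟩ := Set.mem_iUnion.mp (hcov ⟨f, hf, rfl⟩)
    Set.mem_iUnion.mpr ⟨i, hσt i ⟨hi, hf⟩⟩
  calc 1 ≤ ∑' i, ((level S (σ i).length).ncard : ℝ≥0∞)⁻¹ :=
        one_le_tsum_of_paths_subset_iUnion_cylinder hS hSfin hSnl hSub hσS hσcov
    _ ≤ ∑' i, ((⨆ _ : (t i).Nonempty, Metric.ediam (t i) ^ r) + c i) := ENNReal.tsum_le_tsum hσw
    _ ≤ (∑' i, ⨆ _ : (t i).Nonempty, Metric.ediam (t i) ^ r) + δ := by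
        rw [ENNReal.tsum_add]
        exact add_le_add_right hcδ.le _

end FractalTree
end

section
/- Let E be the Cantor group, the set of all sequences x : ℕ → ℤ/2ℤ under pointwise addition, equipped with the ultrametric d(x,y) = 2^{-n} for distinct x,y, where n is the least index with x(n) ≠ y(n). For every pair of reals α, β with 0 ≤ α ≤ β ≤ 1 there exists a closed subgroup U of E whose lower box dimension equals α and whose upper box dimension equals β; moreover U can be chosen so that its Hausdorff dimension equals α as well. -/
open Filter MeasureTheory

namespace CantorGroup

open Classical in
/-- The ultrametric on the Cantor group `E = (ℕ → ℤ/2ℤ)`: `d(x,x) = 0` and, for `x ≠ y`,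
`d(x,y) = 2^{-n}` where `n` is the least index with `x n ≠ y n`. -/
noncomputable def cantorDist (x y : ℕ → ZMod 2) : ℝ :=
  if h : ∃ n, x n ≠ y n then (2 : ℝ)⁻¹ ^ Nat.find h else 0

/-- The closed subgroup `U_R = { x ∈ E : x n = 0 for all n ∉ R }`. -/
def UR (R : Set ℕ) : Set (ℕ → ZMod 2) := {x | ∀ n : ℕ, n ∉ R → x n = 0}

/-- `coverNum A α` is the least cardinality of a cover of `A` by sets of diameter at
most `α` (with junk value `0` if no finite such cover exists). -/
noncomputable def coverNum {X : Type*} [MetricSpace X] (A : Set X) (α : ℝ) : ℕ :=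
  sInf {k : ℕ | ∃ 𝒞 : Finset (Set X), 𝒞.card = k ∧
    (∀ E ∈ 𝒞, Metric.diam E ≤ α) ∧ A ⊆ ⋃ E ∈ 𝒞, E}

/-- The lower box (Minkowski) dimension of a set in a metric space. -/
noncomputable def lowerBoxDim {X : Type*} [MetricSpace X] (A : Set X) : ℝ :=
  Filter.liminf (fun α : ℝ => Real.log (coverNum A α) / Real.log (1 / α))
    (nhdsWithin 0 (Set.Ioi 0))

/-- The upper box (Minkowski) dimension of a set in a metric space. -/
noncomputable def upperBoxDim {X : Type*} [MetricSpace X] (A : Set X) : ℝ :=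
  Filter.limsup (fun α : ℝ => Real.log (coverNum A α) / Real.log (1 / α))
    (nhdsWithin 0 (Set.Ioi 0))

/-!
For `R ⊆ ℕ`, the group `UR R` is covered by `2 ^ #(R ∩ [0, m))` cylinders of diameter
`2⁻¹ ^ m`, and by no fewer sets of diameter less than `2⁻¹ ^ (m - 1)`, because the image of fair
coin tossing under `y ↦ R.indicator y` gives each such set mass at most `2⁻¹ ^ #(R ∩ [0, m))`.
So the lower and upper box dimensions of `UR R` are the lower and upper densities of `R`. The same
mass distribution bounds its Hausdorff dimension below by the lower density, and the cylinder
covers at scales realising the lower density bound it above. It remains to find `R` with lower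
density `α` and upper density `β`: take the jumps of `⌊g⌋`, where `g` grows with slope `α` and `β`
on alternate blocks `[2 ^ 2 ^ k, 2 ^ 2 ^ (k + 1))`, each of which dwarfs everything before it.
-/

open scoped ENNReal Topology Classical

section LiminfLimsup

variable {ι : Type*} {l : Filter ι} [l.NeBot] {u : ι → ℝ} {a : ℝ}

lemma liminf_eq_of_forall_pos (hbdd : IsBoundedUnder (· ≤ ·) l u)
    (hle : ∀ ε > 0, ∀ᶠ x in l, a - ε ≤ u x) (hfreq : ∀ ε > 0, ∃ᶠ x in l, u x ≤ a + ε) :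
    liminf u l = a :=
  le_antisymm
    (le_of_forall_pos_le_add fun ε hε =>
      liminf_le_of_frequently_le (hfreq ε hε) ⟨a - 1, hle 1 one_pos⟩)
    (le_of_forall_sub_le fun ε hε => le_liminf_of_le hbdd.isCoboundedUnder_ge (hle ε hε))

lemma limsup_eq_of_forall_pos (hbdd : IsBoundedUnder (· ≥ ·) l u)
    (hle : ∀ ε > 0, ∀ᶠ x in l, u x ≤ a + ε) (hfreq : ∀ ε > 0, ∃ᶠ x in l, a - ε ≤ u x) :
    limsup u l = a :=
  le_antisymm
    (le_of_forall_pos_le_add fun ε hε => limsup_le_of_le hbdd.isCoboundedUnder_le (hle ε hε))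
    (le_of_forall_sub_le fun ε hε =>
      le_limsup_of_frequently_le (hfreq ε hε) ⟨a + 1, hle 1 one_pos⟩)

end LiminfLimsup

lemma count_eq_floor {g : ℕ → ℝ} (h0 : g 0 = 0) (hmono : Monotone g)
    (hstep : ∀ n, g (n + 1) ≤ g n + 1) {R : Set ℕ} (hR : ∀ n, n ∈ R ↔ ⌊g n⌋₊ < ⌊g (n + 1)⌋₊)
    (m : ℕ) : Nat.count (· ∈ R) m = ⌊g m⌋₊ := by
  induction m with
  | zero => simp [h0]
  | succ n ih =>
    have hg : 0 ≤ g n := h0 ▸ hmono n.zero_le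
    have h1 : ⌊g n⌋₊ ≤ ⌊g (n + 1)⌋₊ := Nat.floor_le_floor (hmono n.le_succ)
    have h2 : ⌊g (n + 1)⌋₊ ≤ ⌊g n⌋₊ + 1 :=
      (Nat.floor_le_floor (hstep n)).trans (Nat.floor_add_one hg).le
    rw [Nat.count_succ, ih]
    split_ifs with h <;> rw [hR] at h <;> omega

lemma eventually_exists_pow_le_lt (N : ℕ) :
    ∀ᶠ a in 𝓝[>] (0 : ℝ), ∃ m ≥ N, 2⁻¹ ^ (m + 1) ≤ a ∧ a < 2⁻¹ ^ m := by
  filter_upwards [Ioo_mem_nhdsGT (by positivity : (0 : ℝ) < 2⁻¹ ^ N)] with a ⟨ha0, haN⟩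
  have hex : ∃ k : ℕ, (2⁻¹ : ℝ) ^ k ≤ a :=
    (exists_pow_lt_of_lt_one ha0 (by norm_num)).imp fun _ => le_of_lt
  have hN : N < Nat.find hex := (Nat.lt_find_iff hex N).2 fun j hj =>
    not_le.2 (haN.trans_le (pow_le_pow_of_le_one (by norm_num) (by norm_num) hj))
  obtain ⟨k, hk⟩ := Nat.exists_eq_add_of_lt hN
  refine ⟨N + k, le_self_add, hk ▸ Nat.find_spec hex, not_le.1 (Nat.find_min hex (by omega))⟩

lemma inv_two_pow_rpow (m : ℕ) (d : ℝ) : ((2⁻¹ : ℝ) ^ m) ^ d = 2 ^ (-(m * d)) := by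
  rw [← Real.rpow_natCast, ← Real.rpow_mul (by norm_num), Real.inv_rpow (by norm_num),
    Real.rpow_neg (by norm_num)]

lemma inv_two_pow_le_rpow {c m : ℕ} {d K : ℝ} (h : d * m ≤ c + K) :
    (2⁻¹ : ℝ) ^ c ≤ 2 ^ K * ((2⁻¹ : ℝ) ^ m) ^ d := by
  rw [inv_two_pow_rpow, ← Real.rpow_add two_pos, inv_pow, ← Real.rpow_natCast,
    ← Real.rpow_neg two_pos.le]
  exact Real.rpow_le_rpow_of_exponent_le one_le_two (by linarith)

lemma two_pow_mul_rpow_le {c M : ℕ} {d d' : ℝ} (h : (c : ℝ) ≤ d' * M) :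
    (2 : ℝ) ^ c * ((2⁻¹ : ℝ) ^ M) ^ d ≤ ((2 : ℝ) ^ (d' - d)) ^ M := by
  rw [inv_two_pow_rpow, ← Real.rpow_natCast, ← Real.rpow_add two_pos,
    ← Real.rpow_mul_natCast two_pos.le]
  exact Real.rpow_le_rpow_of_exponent_le one_le_two (by linarith)

lemma tendsto_inv_two_pow_rpow {d : ℝ} (hd : 0 < d) :
    Tendsto (fun m : ℕ => ((2⁻¹ : ℝ) ^ m) ^ d) atTop (𝓝 0) := by
  simp_rw [← Real.rpow_natCast_mul (by norm_num : (0 : ℝ) ≤ 2⁻¹), mul_comm _ d,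
    Real.rpow_mul_natCast (by norm_num : (0 : ℝ) ≤ 2⁻¹)]
  exact tendsto_pow_atTop_nhds_zero_of_lt_one (by positivity)
    (Real.rpow_lt_one (by norm_num) (by norm_num) hd)

lemma inv_two_pow_eq_ofReal (n : ℕ) : (2⁻¹ : ℝ≥0∞) ^ n = ENNReal.ofReal ((2⁻¹ : ℝ) ^ n) := by
  rw [ENNReal.ofReal_pow (by norm_num), ENNReal.ofReal_inv_of_pos two_pos, ENNReal.ofReal_ofNat]

lemma cantorDist_le_one (x y : ℕ → ZMod 2) : cantorDist x y ≤ 1 := by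
  unfold cantorDist
  split_ifs
  · exact pow_le_one₀ (by norm_num) (by norm_num)
  · exact zero_le_one

lemma cantorDist_le_pow_iff {x y : ℕ → ZMod 2} {m : ℕ} :
    cantorDist x y ≤ 2⁻¹ ^ m ↔ ∀ n < m, x n = y n := by
  unfold cantorDist
  split_ifs with h
  · rw [pow_le_pow_iff_right_of_lt_one₀ (by norm_num) (by norm_num), Nat.le_find_iff]
    simp only [not_not]
  · push Not at h
    simp [h]

lemma cantorDist_lt_pow_iff {x y : ℕ → ZMod 2} {m : ℕ} :
    cantorDist x y < 2⁻¹ ^ m ↔ ∀ n ≤ m, x n = y n := by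
  unfold cantorDist
  split_ifs with h
  · rw [pow_lt_pow_iff_right_of_lt_one₀ (by norm_num) (by norm_num), Nat.lt_find_iff]
    simp only [not_not]
  · push Not at h
    simp [h]

def URSubgroup (R : Set ℕ) : AddSubgroup (ℕ → ZMod 2) where
  carrier := UR R
  add_mem' hx hy n hn := by simp [hx n hn, hy n hn]
  zero_mem' _ _ := rfl
  neg_mem' hx n hn := by simp [hx n hn]

noncomputable def initialPart (R : Set ℕ) (m : ℕ) : Finset ℕ := (Finset.range m).filter (· ∈ R)

lemma card_initialPart (R : Set ℕ) (m : ℕ) : (initialPart R m).card = Nat.count (· ∈ R) m :=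
  (Nat.count_eq_card_filter_range _ _).symm

def piece (R : Set ℕ) (m : ℕ) (σ : initialPart R m → ZMod 2) : Set (ℕ → ZMod 2) :=
  {x | x ∈ UR R ∧ ∀ n : initialPart R m, x n = σ n}

lemma UR_subset_iUnion_piece (R : Set ℕ) (m : ℕ) : UR R ⊆ ⋃ σ, piece R m σ := fun x hx =>
  Set.mem_iUnion.2 ⟨fun n => x n, hx, fun _ => rfl⟩

lemma eq_of_mem_piece {R : Set ℕ} {m n : ℕ} {σ : initialPart R m → ZMod 2} {x y : ℕ → ZMod 2}
    (hx : x ∈ piece R m σ) (hy : y ∈ piece R m σ) (hn : n < m) : x n = y n := by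
  by_cases hR : n ∈ R
  · have hn' : n ∈ initialPart R m := Finset.mem_filter.2 ⟨Finset.mem_range.2 hn, hR⟩
    rw [hx.2 ⟨n, hn'⟩, hy.2 ⟨n, hn'⟩]
  · rw [hx.1 n hR, hy.1 n hR]

lemma card_fun_initialPart (R : Set ℕ) (m : ℕ) :
    Fintype.card (initialPart R m → ZMod 2) = 2 ^ Nat.count (· ∈ R) m := by
  rw [Fintype.card_fun, ZMod.card, Fintype.card_coe, card_initialPart]

noncomputable def coinMeasure : Measure (ℕ → ZMod 2) :=
  Measure.infinitePi fun _ => (PMF.uniformOfFintype (ZMod 2)).toMeasure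

instance : IsProbabilityMeasure coinMeasure := by
  unfold coinMeasure
  infer_instance

lemma coinMeasure_cylinder (s : Finset ℕ) (z : ℕ → ZMod 2) :
    coinMeasure {y | ∀ n ∈ s, y n = z n} = 2⁻¹ ^ s.card := by
  have : {y : ℕ → ZMod 2 | ∀ n ∈ s, y n = z n} = Set.pi s fun n => {z n} := by ext; simp
  rw [this, coinMeasure, Measure.infinitePi_pi
    (μ := fun _ => (PMF.uniformOfFintype (ZMod 2)).toMeasure) fun _ _ => measurableSet_singleton _]
  simp [PMF.uniformOfFintype_apply, ZMod.card]

-- An outer measure is all the mass distribution argument needs, so `φ` need not be measurable.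
noncomputable def imageMeasure {X : Type*} (φ : (ℕ → ZMod 2) → X) (R : Set ℕ) : OuterMeasure X :=
  OuterMeasure.map (fun y => φ (R.indicator y)) coinMeasure.toOuterMeasure

lemma imageMeasure_image_UR {X : Type*} {φ : (ℕ → ZMod 2) → X} (R : Set ℕ) :
    imageMeasure φ R (φ '' UR R) = 1 := by
  have : (fun y => φ (R.indicator y)) ⁻¹' (φ '' UR R) = Set.univ :=
    Set.eq_univ_of_forall fun y => ⟨_, fun n hn => Set.indicator_of_notMem hn y, rfl⟩
  rw [imageMeasure, OuterMeasure.map_apply, this, Measure.coe_toOuterMeasure, measure_univ]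

noncomputable def partialDensity (R : Set ℕ) (m : ℕ) : ℝ := Nat.count (· ∈ R) m / m

lemma partialDensity_nonneg (R : Set ℕ) (m : ℕ) : 0 ≤ partialDensity R m := by
  unfold partialDensity; positivity

lemma partialDensity_le_one (R : Set ℕ) (m : ℕ) : partialDensity R m ≤ 1 :=
  div_le_one_of_le₀ (by exact_mod_cast Nat.count_le _) (Nat.cast_nonneg m)

lemma isBoundedUnder_le_partialDensity (R : Set ℕ) :
    IsBoundedUnder (· ≤ ·) atTop (partialDensity R) :=
  isBoundedUnder_of ⟨1, partialDensity_le_one R⟩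

lemma isBoundedUnder_ge_partialDensity (R : Set ℕ) :
    IsBoundedUnder (· ≥ ·) atTop (partialDensity R) :=
  isBoundedUnder_of ⟨0, partialDensity_nonneg R⟩

lemma liminf_partialDensity_nonneg (R : Set ℕ) : 0 ≤ liminf (partialDensity R) atTop :=
  le_liminf_of_le (isBoundedUnder_le_partialDensity R).isCoboundedUnder_ge
    (Eventually.of_forall (partialDensity_nonneg R))

lemma count_le_mul_of_partialDensity_le {R : Set ℕ} {m : ℕ} {c : ℝ}
    (h : partialDensity R m ≤ c) : (Nat.count (· ∈ R) m : ℝ) ≤ c * m := by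
  rcases Nat.eq_zero_or_pos m with rfl | hm
  · simp
  · rwa [partialDensity, div_le_iff₀ (by exact_mod_cast hm)] at h

lemma mul_le_count_of_le_partialDensity {R : Set ℕ} {m : ℕ} {c : ℝ}
    (h : c ≤ partialDensity R m) : c * m ≤ Nat.count (· ∈ R) m := by
  rcases Nat.eq_zero_or_pos m with rfl | hm
  · simp
  · rwa [partialDensity, le_div_iff₀ (by exact_mod_cast hm)] at h

section Covering

variable {X : Type*} [MetricSpace X] {φ : (ℕ → ZMod 2) → X}
  (hdist : ∀ x y : ℕ → ZMod 2, dist (φ x) (φ y) = cantorDist x y)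
include hdist

lemma isClosed_image_UR (hφ : Function.Surjective φ) (R : Set ℕ) : IsClosed (φ '' UR R) := by
  refine isClosed_of_closure_subset fun p hp => ?_
  obtain ⟨x, rfl⟩ := hφ p
  refine ⟨x, fun n hn => ?_, rfl⟩
  obtain ⟨_, ⟨u, hu, rfl⟩, hxu⟩ := Metric.mem_closure_iff.1 hp (2⁻¹ ^ n) (by positivity)
  rw [hdist] at hxu
  rw [cantorDist_lt_pow_iff.1 hxu n le_rfl]
  exact hu n hn

lemma isBounded_of_surjective (hφ : Function.Surjective φ) (s : Set X) : Bornology.IsBounded s := by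
  refine Metric.isBounded_iff.2 ⟨1, fun p _ q _ => ?_⟩
  obtain ⟨x, rfl⟩ := hφ p
  obtain ⟨y, rfl⟩ := hφ q
  exact (hdist x y).trans_le (cantorDist_le_one x y)

lemma dist_le_pow_succ_of_lt (hφ : Function.Surjective φ) {p q : X} {m : ℕ}
    (h : dist p q < 2⁻¹ ^ m) : dist p q ≤ 2⁻¹ ^ (m + 1) := by
  obtain ⟨x, rfl⟩ := hφ p
  obtain ⟨y, rfl⟩ := hφ q
  rw [hdist] at h ⊢
  exact cantorDist_le_pow_iff.2 fun n hn => cantorDist_lt_pow_iff.1 h n (Nat.lt_succ_iff.1 hn)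

lemma imageMeasure_le {R : Set ℕ} {t : Set X} {m : ℕ}
    (ht : ∀ p ∈ t, ∀ q ∈ t, dist p q ≤ 2⁻¹ ^ m) :
    imageMeasure φ R t ≤ 2⁻¹ ^ Nat.count (· ∈ R) m := by
  rw [imageMeasure, OuterMeasure.map_apply, Measure.coe_toOuterMeasure]
  rcases ((fun y => φ (R.indicator y)) ⁻¹' t).eq_empty_or_nonempty with hS | ⟨z, hz⟩
  · simp [hS]
  calc coinMeasure _ ≤ coinMeasure {y | ∀ n ∈ initialPart R m, y n = z n} :=
        measure_mono fun y hy n hn => ?_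
    _ = _ := by rw [coinMeasure_cylinder, card_initialPart]
  obtain ⟨hnm, hnR⟩ := Finset.mem_filter.1 hn
  have := cantorDist_le_pow_iff.1 ((hdist _ _).symm.trans_le (ht _ hy _ hz)) n
    (Finset.mem_range.1 hnm)
  simpa [Set.indicator_of_mem hnR] using this

lemma imageMeasure_le_of_ediam_le {R : Set ℕ} {t : Set X} {m : ℕ}
    (ht : Metric.ediam t ≤ ENNReal.ofReal (2⁻¹ ^ m)) :
    imageMeasure φ R t ≤ 2⁻¹ ^ Nat.count (· ∈ R) m :=
  imageMeasure_le hdist fun p hp q hq => by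
    have := (Metric.edist_le_ediam_of_mem hp hq).trans ht
    rwa [edist_dist, ENNReal.ofReal_le_ofReal_iff (by positivity)] at this

lemma imageMeasure_le_rpow_of_ediam_le {R : Set ℕ} {d K : ℝ}
    (hK : ∀ m : ℕ, d * m ≤ Nat.count (· ∈ R) m + K) {t : Set X} {m : ℕ}
    (ht : Metric.ediam t ≤ ENNReal.ofReal (2⁻¹ ^ m)) :
    imageMeasure φ R t ≤ ENNReal.ofReal (2 ^ K * ((2⁻¹ : ℝ) ^ m) ^ d) := by
  refine (imageMeasure_le_of_ediam_le hdist ht).trans ?_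
  rw [inv_two_pow_eq_ofReal]
  exact ENNReal.ofReal_le_ofReal (inv_two_pow_le_rpow (hK m))

lemma imageMeasure_le_mul_ediam_rpow {R : Set ℕ} {d K : ℝ} (hd : 0 < d)
    (hK : ∀ m : ℕ, d * m ≤ Nat.count (· ∈ R) m + K) {t : Set X} (ht : Metric.ediam t ≤ 1) :
    imageMeasure φ R t ≤ ENNReal.ofReal (2 ^ (K + d)) * Metric.ediam t ^ d := by
  rcases eq_or_ne (Metric.ediam t) 0 with h0 | h0
  · have hlim : Tendsto (fun m : ℕ => ENNReal.ofReal (2 ^ K * ((2⁻¹ : ℝ) ^ m) ^ d)) atTop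
        (𝓝 0) := by
      simpa using ENNReal.tendsto_ofReal ((tendsto_inv_two_pow_rpow hd).const_mul (2 ^ K))
    have : imageMeasure φ R t ≤ 0 := ge_of_tendsto' hlim fun m =>
      imageMeasure_le_rpow_of_ediam_le hdist hK (h0 ▸ zero_le)
    simp [nonpos_iff_eq_zero.1 this]
  have hne : Metric.ediam t ≠ ⊤ := ne_top_of_le_ne_top ENNReal.one_ne_top ht
  set δ := (Metric.ediam t).toReal
  have hδ : Metric.ediam t = ENNReal.ofReal δ := (ENNReal.ofReal_toReal hne).symm
  have hδ0 : 0 < δ := ENNReal.toReal_pos h0 hne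
  obtain ⟨m, hm, hm'⟩ := exists_nat_pow_near_of_lt_one hδ0
    (ENNReal.toReal_le_of_le_ofReal zero_le_one (by simpa using ht))
    (by norm_num : (0 : ℝ) < 2⁻¹) (by norm_num)
  calc imageMeasure φ R t ≤ ENNReal.ofReal (2 ^ K * ((2⁻¹ : ℝ) ^ m) ^ d) :=
        imageMeasure_le_rpow_of_ediam_le hdist hK (hδ ▸ ENNReal.ofReal_le_ofReal hm')
    _ = ENNReal.ofReal (2 ^ (K + d) * ((2⁻¹ : ℝ) ^ (m + 1)) ^ d) := by
        rw [inv_two_pow_rpow, inv_two_pow_rpow, ← Real.rpow_add two_pos,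
          ← Real.rpow_add two_pos]
        push_cast
        ring_nf
    _ ≤ ENNReal.ofReal (2 ^ (K + d) * δ ^ d) := by gcongr
    _ = ENNReal.ofReal (2 ^ (K + d)) * Metric.ediam t ^ d := by
        rw [ENNReal.ofReal_mul (by positivity), hδ, ENNReal.ofReal_rpow_of_nonneg hδ0.le hd.le]

lemma ediam_image_piece_le (R : Set ℕ) (m : ℕ) (σ : initialPart R m → ZMod 2) :
    Metric.ediam (φ '' piece R m σ) ≤ ENNReal.ofReal (2⁻¹ ^ m) := by
  refine Metric.ediam_le_iff.2 ?_
  rintro _ ⟨x, hx, rfl⟩ _ ⟨y, hy, rfl⟩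
  rw [edist_dist, hdist]
  exact ENNReal.ofReal_le_ofReal (cantorDist_le_pow_iff.2 fun n hn => eq_of_mem_piece hx hy hn)

lemma sum_ediam_image_piece_rpow_le (R : Set ℕ) (m : ℕ) {d : ℝ} (hd : 0 ≤ d) :
    ∑ σ, Metric.ediam (φ '' piece R m σ) ^ d ≤
      ENNReal.ofReal (2 ^ Nat.count (· ∈ R) m * ((2⁻¹ : ℝ) ^ m) ^ d) := calc
  _ ≤ ∑ _σ : initialPart R m → ZMod 2, ENNReal.ofReal (2⁻¹ ^ m) ^ d :=
      Finset.sum_le_sum fun σ _ => ENNReal.rpow_le_rpow (ediam_image_piece_le hdist R m σ) hd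
  _ = _ := by
      rw [Finset.sum_const, Finset.card_univ, card_fun_initialPart, nsmul_eq_mul,
        ENNReal.ofReal_mul (by positivity), ENNReal.ofReal_rpow_of_nonneg (by positivity) hd,
        ENNReal.ofReal_pow zero_le_two, ENNReal.ofReal_ofNat, Nat.cast_pow, Nat.cast_ofNat]

lemma exists_cover_image_UR (R : Set ℕ) {m : ℕ} {a : ℝ} (ha : 2⁻¹ ^ m ≤ a) :
    ∃ 𝒞 : Finset (Set X), 𝒞.card ≤ 2 ^ Nat.count (· ∈ R) m ∧
      (∀ E ∈ 𝒞, Metric.diam E ≤ a) ∧ φ '' UR R ⊆ ⋃ E ∈ 𝒞, E := by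
  refine ⟨Finset.univ.image fun σ => φ '' piece R m σ, ?_, ?_, ?_⟩
  · exact Finset.card_image_le.trans (by rw [Finset.card_univ, card_fun_initialPart])
  · simp only [Finset.mem_image, Finset.mem_univ, true_and, forall_exists_index,
      forall_apply_eq_imp_iff]
    intro σ
    refine Metric.diam_le_of_forall_dist_le (le_trans (by positivity) ha) ?_
    rintro _ ⟨x, hx, rfl⟩ _ ⟨y, hy, rfl⟩
    rw [hdist]
    exact (cantorDist_le_pow_iff.2 fun n hn => eq_of_mem_piece hx hy hn).trans ha
  · rintro _ ⟨x, hx, rfl⟩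
    obtain ⟨σ, hσ⟩ := Set.mem_iUnion.1 (UR_subset_iUnion_piece R m hx)
    exact Set.mem_biUnion (Finset.mem_image_of_mem _ (Finset.mem_univ σ)) ⟨x, hσ, rfl⟩

lemma two_pow_count_le_card {R : Set ℕ} {m : ℕ} (𝒞 : Finset (Set X))
    (hcov : φ '' UR R ⊆ ⋃ E ∈ 𝒞, E) (hsmall : ∀ E ∈ 𝒞, ∀ p ∈ E, ∀ q ∈ E, dist p q ≤ 2⁻¹ ^ m) :
    2 ^ Nat.count (· ∈ R) m ≤ 𝒞.card := by
  have h : (1 : ℝ≥0∞) ≤ 𝒞.card * 2⁻¹ ^ Nat.count (· ∈ R) m := calc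
    1 = imageMeasure φ R (φ '' UR R) := (imageMeasure_image_UR R).symm
    _ ≤ ∑ E ∈ 𝒞, imageMeasure φ R E := (measure_mono hcov).trans (measure_biUnion_finset_le _ _)
    _ ≤ ∑ E ∈ 𝒞, 2⁻¹ ^ Nat.count (· ∈ R) m :=
        Finset.sum_le_sum fun E hE => imageMeasure_le hdist (hsmall E hE)
    _ = _ := by rw [Finset.sum_const, nsmul_eq_mul]
  rw [← ENNReal.inv_pow, ← div_eq_mul_inv, ENNReal.le_div_iff_mul_le (by simp) (by simp),
    one_mul] at h
  exact_mod_cast h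

theorem coverNum_image_UR (hφ : Function.Surjective φ) (R : Set ℕ) {m : ℕ} {a : ℝ}
    (ha : 2⁻¹ ^ (m + 1) ≤ a) (ha' : a < 2⁻¹ ^ m) :
    coverNum (φ '' UR R) a = 2 ^ Nat.count (· ∈ R) (m + 1) := by
  unfold coverNum
  obtain ⟨𝒞, hcard, hdiam, hcov⟩ := exists_cover_image_UR hdist R ha
  refine le_antisymm (le_trans (Nat.sInf_le ⟨𝒞, rfl, hdiam, hcov⟩) hcard)
    (le_csInf ⟨_, 𝒞, rfl, hdiam, hcov⟩ ?_)
  rintro k ⟨𝒞', rfl, hdiam', hcov'⟩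
  refine two_pow_count_le_card hdist 𝒞' hcov' fun E hE p hp q hq => ?_
  exact dist_le_pow_succ_of_lt hdist hφ <|
    ((Metric.dist_le_diam_of_mem (isBounded_of_surjective hdist hφ E) hp hq).trans
      (hdiam' E hE)).trans_lt ha'

end Covering

noncomputable def boxRatio {X : Type*} [MetricSpace X] (A : Set X) (a : ℝ) : ℝ :=
  Real.log (coverNum A a) / Real.log (1 / a)

section BoxDimension

variable {X : Type*} [MetricSpace X] {φ : (ℕ → ZMod 2) → X}
  (hdist : ∀ x y : ℕ → ZMod 2, dist (φ x) (φ y) = cantorDist x y) (hφ : Function.Surjective φ)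
include hdist hφ

lemma boxRatio_image_UR_eq (R : Set ℕ) {m : ℕ} {a : ℝ} (ha : 2⁻¹ ^ (m + 1) ≤ a)
    (ha' : a < 2⁻¹ ^ m) :
    boxRatio (φ '' UR R) a = Nat.count (· ∈ R) (m + 1) * Real.log 2 / Real.log (1 / a) := by
  rw [boxRatio, coverNum_image_UR hdist hφ R ha ha', Nat.cast_pow, Nat.cast_ofNat, Real.log_pow]

lemma boxRatio_image_UR_pow (R : Set ℕ) {m : ℕ} (hm : 1 ≤ m) :
    boxRatio (φ '' UR R) (2⁻¹ ^ m) = partialDensity R m := by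
  obtain ⟨k, rfl⟩ := Nat.exists_eq_add_of_le' hm
  rw [boxRatio_image_UR_eq hdist hφ R le_rfl (pow_lt_pow_right_of_lt_one₀ (by norm_num)
    (by norm_num) k.lt_succ_self), one_div, ← inv_pow, inv_inv, Real.log_pow, partialDensity]
  have : Real.log 2 ≠ 0 := (Real.log_pos one_lt_two).ne'
  field_simp

lemma boxRatio_image_UR_mem (R : Set ℕ) {m : ℕ} (hm : 1 ≤ m) {a : ℝ}
    (ha : 2⁻¹ ^ (m + 1) ≤ a) (ha' : a < 2⁻¹ ^ m) :
    partialDensity R (m + 1) ≤ boxRatio (φ '' UR R) a ∧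
      boxRatio (φ '' UR R) a ≤ partialDensity R (m + 1) + 1 / m := by
  rw [boxRatio_image_UR_eq hdist hφ R ha ha', partialDensity]
  have hcm : (Nat.count (· ∈ R) (m + 1) : ℝ) ≤ m + 1 := by
    exact_mod_cast Nat.count_le (· ∈ R) (n := m + 1)
  set c : ℝ := (Nat.count (· ∈ R) (m + 1) : ℝ)
  have hc0 : 0 ≤ c := Nat.cast_nonneg _
  have hm' : (1 : ℝ) ≤ m := by exact_mod_cast hm
  have hl2 : 0 < Real.log 2 := Real.log_pos one_lt_two
  have ha0 : 0 < a := lt_of_lt_of_le (by positivity) ha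
  have hlow : m * Real.log 2 < Real.log (1 / a) := by
    rw [← Real.log_pow]
    refine Real.log_lt_log (by positivity) ?_
    rwa [one_div, ← lt_inv_comm₀ ha0 (by positivity), ← inv_pow]
  have hup : Real.log (1 / a) ≤ (m + 1) * Real.log 2 := by
    rw [← Nat.cast_succ, ← Real.log_pow]
    refine Real.log_le_log (by positivity) ?_
    rwa [one_div, inv_le_comm₀ ha0 (by positivity), ← inv_pow]
  have hL : 0 < Real.log (1 / a) := lt_of_le_of_lt (by positivity) hlow
  push_cast
  constructor
  · rw [div_le_div_iff₀ (by positivity) hL]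
    nlinarith
  · calc c * Real.log 2 / Real.log (1 / a) ≤ c / m := by
          rw [div_le_div_iff₀ hL (by positivity)]
          nlinarith
      _ ≤ c / (m + 1) + 1 / m := by
          rw [div_add_div _ _ (by positivity) (by positivity), div_le_div_iff₀ (by positivity)
            (by positivity)]
          nlinarith

lemma eventually_boxRatio_image_UR_near (R : Set ℕ) (N : ℕ) :
    ∀ᶠ a in 𝓝[>] (0 : ℝ), ∃ m ≥ N, partialDensity R m ≤ boxRatio (φ '' UR R) a ∧
      boxRatio (φ '' UR R) a ≤ partialDensity R m + 1 / (N + 1) := by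
  filter_upwards [eventually_exists_pow_le_lt (N + 1)] with a ⟨k, hk, ha, ha'⟩
  obtain ⟨hlow, hup⟩ := boxRatio_image_UR_mem hdist hφ R (by omega) ha ha'
  refine ⟨k + 1, by omega, hlow, hup.trans ?_⟩
  gcongr
  exact_mod_cast hk

lemma frequently_boxRatio_image_UR (R : Set ℕ) {P : ℝ → Prop}
    (h : ∃ᶠ m in atTop, P (partialDensity R m)) :
    ∃ᶠ a in 𝓝[>] (0 : ℝ), P (boxRatio (φ '' UR R) a) :=
  (tendsto_pow_atTop_nhdsWithin_zero_of_lt_one (by norm_num : (0 : ℝ) < 2⁻¹)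
    (by norm_num)).frequently <| (h.and_eventually (eventually_ge_atTop 1)).mono
      fun m ⟨hP, hm⟩ => by rwa [boxRatio_image_UR_pow hdist hφ R hm]

theorem lowerBoxDim_image_UR (R : Set ℕ) :
    lowerBoxDim (φ '' UR R) = liminf (partialDensity R) atTop := by
  change liminf (boxRatio (φ '' UR R)) (𝓝[>] 0) = _
  set L := liminf (partialDensity R) atTop
  refine liminf_eq_of_forall_pos ?_ (fun ε hε => ?_) fun ε hε => ?_
  · refine isBoundedUnder_of_eventually_le (a := 2) ?_
    filter_upwards [eventually_boxRatio_image_UR_near hdist hφ R 0] with a ha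
    obtain ⟨m, -, -, hup⟩ := ha
    norm_num at hup
    linarith [partialDensity_le_one R m]
  · obtain ⟨N, hN⟩ := eventually_atTop.1 <| eventually_lt_of_lt_liminf (by linarith : L - ε < L)
      (isBoundedUnder_ge_partialDensity R)
    filter_upwards [eventually_boxRatio_image_UR_near hdist hφ R N] with a ha
    obtain ⟨m, hm, hlow, -⟩ := ha
    linarith [hN m hm]
  · exact frequently_boxRatio_image_UR hdist hφ R (P := (· ≤ L + ε)) <|
      (frequently_lt_of_liminf_lt (isBoundedUnder_le_partialDensity R).isCoboundedUnder_ge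
        (by linarith : L < L + ε)).mono fun _ h => h.le

theorem upperBoxDim_image_UR (R : Set ℕ) :
    upperBoxDim (φ '' UR R) = limsup (partialDensity R) atTop := by
  change limsup (boxRatio (φ '' UR R)) (𝓝[>] 0) = _
  set L := limsup (partialDensity R) atTop
  refine limsup_eq_of_forall_pos ?_ (fun ε hε => ?_) fun ε hε => ?_
  · refine isBoundedUnder_of_eventually_ge (a := 0) ?_
    filter_upwards [eventually_boxRatio_image_UR_near hdist hφ R 0] with a ha
    obtain ⟨m, -, hlow, -⟩ := ha
    linarith [partialDensity_nonneg R m]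
  · obtain ⟨N₁, hN₁⟩ := eventually_atTop.1 <| eventually_lt_of_limsup_lt
      (by linarith : L < L + ε / 2) (isBoundedUnder_le_partialDensity R)
    obtain ⟨N₂, hN₂⟩ := exists_nat_one_div_lt (half_pos hε)
    filter_upwards [eventually_boxRatio_image_UR_near hdist hφ R (max N₁ N₂)] with a ha
    obtain ⟨m, hm, -, hup⟩ := ha
    have : 1 / ((max N₁ N₂ : ℕ) + 1 : ℝ) ≤ 1 / (N₂ + 1) := by
      gcongr
      exact_mod_cast le_max_right N₁ N₂
    linarith [hN₁ m (le_of_max_le_left hm)]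
  · exact frequently_boxRatio_image_UR hdist hφ R (P := (L - ε ≤ ·)) <|
      (frequently_lt_of_lt_limsup (isBoundedUnder_ge_partialDensity R).isCoboundedUnder_le
        (by linarith : L - ε < L)).mono fun _ h => h.le

end BoxDimension

section HausdorffMeasure

variable {X : Type*} [MetricSpace X] [MeasurableSpace X] [BorelSpace X] {φ : (ℕ → ZMod 2) → X}
  (hdist : ∀ x y : ℕ → ZMod 2, dist (φ x) (φ y) = cantorDist x y)
include hdist

theorem hausdorffMeasure_image_UR_eq_zero (R : Set ℕ) {d : ℝ}
    (hd : liminf (partialDensity R) atTop < d) : μH[d] (φ '' UR R) = 0 := by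
  set L := liminf (partialDensity R) atTop
  have hd0 : 0 ≤ d := (liminf_partialDensity_nonneg R).trans hd.le
  obtain ⟨ψ, hψ, hψL⟩ := extraction_of_frequently_atTop <| frequently_lt_of_liminf_lt
    (isBoundedUnder_le_partialDensity R).isCoboundedUnder_ge (by linarith : L < (L + d) / 2)
  have hr : Tendsto (fun k => ENNReal.ofReal (2⁻¹ ^ ψ k)) atTop (𝓝 0) := by
    simpa using ENNReal.tendsto_ofReal ((tendsto_pow_atTop_nhds_zero_of_lt_one
      (by norm_num : (0 : ℝ) ≤ 2⁻¹) (by norm_num)).comp hψ.tendsto_atTop)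
  have hcover : ∀ k, φ '' UR R ⊆ ⋃ σ, φ '' piece R (ψ k) σ := fun k =>
    (Set.image_mono (UR_subset_iUnion_piece R (ψ k))).trans Set.image_iUnion.subset
  have hsum : ∀ k, ∑ σ, Metric.ediam (φ '' piece R (ψ k) σ) ^ d ≤
      ENNReal.ofReal (((2 : ℝ) ^ ((L + d) / 2 - d)) ^ ψ k) := fun k =>
    (sum_ediam_image_piece_rpow_le hdist R _ hd0).trans <| ENNReal.ofReal_le_ofReal <|
      two_pow_mul_rpow_le (count_le_mul_of_partialDensity_le (hψL k).le)
  have hlim : Tendsto (fun k => ENNReal.ofReal (((2 : ℝ) ^ ((L + d) / 2 - d)) ^ ψ k)) atTop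
      (𝓝 0) := by
    simpa using ENNReal.tendsto_ofReal ((tendsto_pow_atTop_nhds_zero_of_lt_one (by positivity)
      (Real.rpow_lt_one_of_one_lt_of_neg one_lt_two (by linarith))).comp hψ.tendsto_atTop)
  refine le_antisymm ?_ zero_le
  calc μH[d] (φ '' UR R) ≤ liminf (fun k => ∑ σ, Metric.ediam (φ '' piece R (ψ k) σ) ^ d) atTop :=
        Measure.hausdorffMeasure_le_liminf_sum d _ _ hr (fun k σ => φ '' piece R (ψ k) σ)
          (Eventually.of_forall fun k σ => ediam_image_piece_le hdist R _ σ)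
          (Eventually.of_forall hcover)
    _ ≤ 0 := (liminf_le_liminf (Eventually.of_forall hsum)).trans hlim.liminf_eq.le

theorem hausdorffMeasure_image_UR_ne_zero (R : Set ℕ) {d : ℝ} (hd0 : 0 < d)
    (hd : d < liminf (partialDensity R) atTop) : μH[d] (φ '' UR R) ≠ 0 := by
  obtain ⟨N, hN⟩ := eventually_atTop.1 <|
    eventually_lt_of_lt_liminf hd (isBoundedUnder_ge_partialDensity R)
  have hK : ∀ m : ℕ, d * m ≤ Nat.count (· ∈ R) m + d * N := fun m => by
    rcases le_total N m with h | h
    · linarith [mul_le_count_of_le_partialDensity (hN m h).le, mul_nonneg hd0.le N.cast_nonneg]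
    · have : (m : ℝ) ≤ N := by exact_mod_cast h
      nlinarith [(Nat.count (· ∈ R) m).cast_nonneg (α := ℝ)]
  set C := ENNReal.ofReal (2 ^ (d * N + d))
  have hC : C ≠ 0 := by positivity
  have hmass : C⁻¹ • imageMeasure φ R ≤ OuterMeasure.mkMetric fun r => r ^ d :=
    OuterMeasure.le_mkMetric _ _ 1 one_pos fun t ht => by
      rw [smul_apply, smul_eq_mul, ENNReal.inv_mul_le_iff hC ENNReal.ofReal_ne_top]
      exact imageMeasure_le_mul_ediam_rpow hdist hd0 hK ht
  have := hmass (φ '' UR R)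
  rw [smul_apply, imageMeasure_image_UR, smul_eq_mul, mul_one, OuterMeasure.coe_mkMetric] at this
  exact ((ENNReal.inv_pos.2 ENNReal.ofReal_ne_top).trans_le this).ne'

end HausdorffMeasure

theorem dimH_image_UR {X : Type*} [MetricSpace X] {φ : (ℕ → ZMod 2) → X}
    (hdist : ∀ x y : ℕ → ZMod 2, dist (φ x) (φ y) = cantorDist x y) (R : Set ℕ) :
    dimH (φ '' UR R) = ENNReal.ofReal (liminf (partialDensity R) atTop) := by
  borelize X
  set L := liminf (partialDensity R) atTop
  refine le_antisymm (le_of_forall_gt fun c hc => ?_) (le_of_forall_lt fun c hc => ?_)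
  · obtain ⟨d, hLd, hdc⟩ := ENNReal.lt_iff_exists_nnreal_btwn.1 hc
    have hLd' : L < d := by
      rwa [ENNReal.ofReal_lt_iff_lt_toReal (liminf_partialDensity_nonneg R) ENNReal.coe_ne_top,
        ENNReal.coe_toReal] at hLd
    refine lt_of_le_of_lt (dimH_le_of_hausdorffMeasure_ne_top ?_) hdc
    rw [hausdorffMeasure_image_UR_eq_zero hdist R hLd']
    exact ENNReal.zero_ne_top
  · obtain ⟨d, hcd, hdL⟩ := ENNReal.lt_iff_exists_nnreal_btwn.1 hc
    have hd0 : 0 < (d : ℝ) := NNReal.coe_pos.2 (ENNReal.coe_pos.1 (pos_of_gt hcd))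
    have hdL' : (d : ℝ) < L := by
      rwa [ENNReal.lt_ofReal_iff_toReal_lt ENNReal.coe_ne_top, ENNReal.coe_toReal] at hdL
    exact hcd.trans_le (le_dimH_of_hausdorffMeasure_ne_zero
      (hausdorffMeasure_image_UR_ne_zero hdist R hd0 hdL'))

lemma blockStart_le_succ (k : ℕ) : 2 ^ 2 ^ k ≤ 2 ^ 2 ^ (k + 1) :=
  Nat.pow_le_pow_right two_pos (Nat.pow_le_pow_right two_pos k.le_succ)

lemma eventually_blockStart (N : ℕ) {ε : ℝ} (hε : 0 < ε) :
    ∀ᶠ k in atTop, N ≤ 2 ^ 2 ^ k ∧ 2 / ((2 ^ 2 ^ k : ℕ) : ℝ) ≤ ε := by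
  have hT : Tendsto (fun k : ℕ => 2 ^ 2 ^ k) atTop atTop := tendsto_atTop_mono
    (fun k => Nat.lt_two_pow_self.le.trans (Nat.pow_le_pow_right two_pos Nat.lt_two_pow_self.le))
    tendsto_id
  filter_upwards [hT.eventually_ge_atTop N,
    (tendsto_natCast_atTop_atTop.comp hT).eventually_ge_atTop (2 / ε)] with k hN hk
  exact ⟨hN, (div_le_iff₀ (by positivity)).2 (by rwa [div_le_iff₀ hε, mul_comm] at hk)⟩

section Density

variable {α β : ℝ}

noncomputable def blockRate (α β : ℝ) (i : ℕ) : ℝ :=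
  if Even (Nat.log 2 (Nat.log 2 i)) then α else β

noncomputable def blockSum (α β : ℝ) (m : ℕ) : ℝ := ∑ i ∈ Finset.range m, blockRate α β i

def densitySet (α β : ℝ) : Set ℕ := {n | ⌊blockSum α β n⌋₊ < ⌊blockSum α β (n + 1)⌋₊}

lemma blockRate_of_mem_block {k i : ℕ} (hi : 2 ^ 2 ^ k ≤ i) (hi' : i < 2 ^ 2 ^ (k + 1)) :
    blockRate α β i = if Even k then α else β := by
  rw [blockRate, Nat.log_eq_of_pow_le_of_lt_pow (Nat.le_log_of_pow_le one_lt_two hi)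
    (Nat.log_lt_of_lt_pow (Nat.one_le_iff_ne_zero.1 (Nat.one_le_two_pow.trans hi)) hi')]

lemma blockRate_mem (hαβ : α ≤ β) (i : ℕ) : blockRate α β i ∈ Set.Icc α β := by
  unfold blockRate
  split_ifs
  exacts [⟨le_rfl, hαβ⟩, ⟨hαβ, le_rfl⟩]

lemma mul_le_blockSum (hαβ : α ≤ β) (m : ℕ) : α * m ≤ blockSum α β m := by
  have := Finset.card_nsmul_le_sum (Finset.range m) _ α fun i _ => (blockRate_mem hαβ i).1
  rwa [Finset.card_range, nsmul_eq_mul, mul_comm] at this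

lemma blockSum_le_mul (hαβ : α ≤ β) (m : ℕ) : blockSum α β m ≤ β * m := by
  have := Finset.sum_le_card_nsmul (Finset.range m) _ β fun i _ => (blockRate_mem hαβ i).2
  rwa [Finset.card_range, nsmul_eq_mul, mul_comm] at this

lemma blockSum_block_succ (k : ℕ) :
    blockSum α β (2 ^ 2 ^ (k + 1)) = blockSum α β (2 ^ 2 ^ k) +
      (if Even k then α else β) * ((2 ^ 2 ^ (k + 1) : ℕ) - (2 ^ 2 ^ k : ℕ) : ℝ) := by
  have hle := blockStart_le_succ k
  rw [blockSum, blockSum, ← Finset.sum_range_add_sum_Ico _ hle, Finset.sum_congr rfl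
    fun i hi => blockRate_of_mem_block (Finset.mem_Ico.1 hi).1 (Finset.mem_Ico.1 hi).2,
    Finset.sum_const, Nat.card_Ico, nsmul_eq_mul, Nat.cast_sub hle, mul_comm]

variable (h0 : 0 ≤ α) (hαβ : α ≤ β) (h1 : β ≤ 1)
include h0 hαβ h1

lemma count_densitySet (m : ℕ) : Nat.count (· ∈ densitySet α β) m = ⌊blockSum α β m⌋₊ := by
  refine count_eq_floor (by simp [blockSum]) (monotone_nat_of_le_succ fun n => ?_) (fun n => ?_)
    (fun _ => Iff.rfl) m <;>
  rw [blockSum, blockSum, Finset.sum_range_succ] <;>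
  linarith [(blockRate_mem hαβ n).1, (blockRate_mem hαβ n).2]

lemma count_densitySet_le (m : ℕ) : (Nat.count (· ∈ densitySet α β) m : ℝ) ≤ blockSum α β m := by
  rw [count_densitySet h0 hαβ h1]
  exact Nat.floor_le ((mul_nonneg h0 m.cast_nonneg).trans (mul_le_blockSum hαβ m))

lemma blockSum_sub_one_le_count_densitySet (m : ℕ) :
    blockSum α β m - 1 ≤ Nat.count (· ∈ densitySet α β) m := by
  rw [count_densitySet h0 hαβ h1]
  linarith [Nat.lt_floor_add_one (blockSum α β m)]

lemma partialDensity_densitySet_le (m : ℕ) : partialDensity (densitySet α β) m ≤ β :=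
  div_le_of_le_mul₀ m.cast_nonneg (h0.trans hαβ)
    ((count_densitySet_le h0 hαβ h1 m).trans (blockSum_le_mul hαβ m))

lemma sub_inv_le_partialDensity_densitySet {m : ℕ} (hm : 1 ≤ m) :
    α - 1 / m ≤ partialDensity (densitySet α β) m := by
  have hm' : (0 : ℝ) < m := by exact_mod_cast hm
  rw [partialDensity, le_div_iff₀ hm', sub_mul, one_div_mul_cancel hm'.ne']
  linarith [blockSum_sub_one_le_count_densitySet h0 hαβ h1 m, mul_le_blockSum hαβ m]

lemma partialDensity_densitySet_block_le {k : ℕ} (hk : Even k) :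
    partialDensity (densitySet α β) (2 ^ 2 ^ (k + 1)) ≤ α + 1 / (2 ^ 2 ^ k : ℕ) := by
  have hsum := blockSum_block_succ (α := α) (β := β) k
  set a : ℕ := 2 ^ 2 ^ k
  have hb : 2 ^ 2 ^ (k + 1) = a * a := by rw [pow_succ, pow_mul, sq]
  have ha : (0 : ℝ) < a := by positivity
  rw [if_pos hk, hb] at hsum
  have key : (Nat.count (· ∈ densitySet α β) (a * a) : ℝ) ≤ α * (a * a) + a := calc
    _ ≤ blockSum α β (a * a) := count_densitySet_le h0 hαβ h1 _
    _ = blockSum α β a + α * (a * a - a) := by rw [hsum]; push_cast; ring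
    _ ≤ β * a + α * (a * a - a) := by linarith [blockSum_le_mul hαβ a]
    _ ≤ α * (a * a) + a := by nlinarith
  rw [partialDensity, hb, div_le_iff₀ (by positivity)]
  have : (α + 1 / a) * (a * a : ℕ) = α * (a * a) + a := by push_cast; field_simp
  rw [this]
  exact_mod_cast key

lemma le_partialDensity_densitySet_block {k : ℕ} (hk : ¬Even k) :
    β - 2 / (2 ^ 2 ^ k : ℕ) ≤ partialDensity (densitySet α β) (2 ^ 2 ^ (k + 1)) := by
  have hsum := blockSum_block_succ (α := α) (β := β) k
  set a : ℕ := 2 ^ 2 ^ k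
  have hb : 2 ^ 2 ^ (k + 1) = a * a := by rw [pow_succ, pow_mul, sq]
  have ha : (1 : ℝ) ≤ a := by exact_mod_cast Nat.one_le_two_pow
  rw [if_neg hk, hb] at hsum
  have key : β * (a * a) - 2 * a ≤ (Nat.count (· ∈ densitySet α β) (a * a) : ℝ) := calc
    _ ≤ α * a + β * (a * a - a) - 1 := by nlinarith
    _ ≤ blockSum α β a + β * (a * a - a) - 1 := by linarith [mul_le_blockSum hαβ a]
    _ = blockSum α β (a * a) - 1 := by rw [hsum]; push_cast; ring
    _ ≤ _ := blockSum_sub_one_le_count_densitySet h0 hαβ h1 _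
  rw [partialDensity, hb, le_div_iff₀ (by positivity)]
  have : (β - 2 / a) * (a * a : ℕ) = β * (a * a) - 2 * a := by push_cast; field_simp
  rw [this]
  exact_mod_cast key

lemma frequently_partialDensity_densitySet_le {ε : ℝ} (hε : 0 < ε) :
    ∃ᶠ m in atTop, partialDensity (densitySet α β) m ≤ α + ε := by
  refine frequently_atTop.2 fun N => ?_
  obtain ⟨k, hk⟩ := eventually_atTop.1 (eventually_blockStart N hε)
  obtain ⟨hN, hsmall⟩ := hk (2 * k) (by omega)
  refine ⟨_, hN.trans (blockStart_le_succ _),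
    (partialDensity_densitySet_block_le h0 hαβ h1 (even_two_mul k)).trans ?_⟩
  have : 1 / ((2 ^ 2 ^ (2 * k) : ℕ) : ℝ) ≤ 2 / (2 ^ 2 ^ (2 * k) : ℕ) :=
    div_le_div_of_nonneg_right one_le_two (by positivity)
  linarith

lemma frequently_le_partialDensity_densitySet {ε : ℝ} (hε : 0 < ε) :
    ∃ᶠ m in atTop, β - ε ≤ partialDensity (densitySet α β) m := by
  refine frequently_atTop.2 fun N => ?_
  obtain ⟨k, hk⟩ := eventually_atTop.1 (eventually_blockStart N hε)
  obtain ⟨hN, hsmall⟩ := hk (2 * k + 1) (by omega)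
  exact ⟨_, hN.trans (blockStart_le_succ _), le_trans (by linarith)
    (le_partialDensity_densitySet_block h0 hαβ h1 (Nat.not_even_iff_odd.2 (odd_two_mul_add_one k)))⟩

theorem exists_liminf_limsup_partialDensity :
    ∃ R : Set ℕ, liminf (partialDensity R) atTop = α ∧ limsup (partialDensity R) atTop = β := by
  refine ⟨densitySet α β,
    liminf_eq_of_forall_pos (isBoundedUnder_le_partialDensity _) (fun ε hε => ?_)
      fun ε hε => frequently_partialDensity_densitySet_le h0 hαβ h1 hε,
    limsup_eq_of_forall_pos (isBoundedUnder_ge_partialDensity _)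
      (fun ε hε => Eventually.of_forall fun m => ?_)
      fun ε hε => frequently_le_partialDensity_densitySet h0 hαβ h1 hε⟩
  · obtain ⟨N, hN⟩ := exists_nat_one_div_lt hε
    filter_upwards [eventually_ge_atTop (N + 1)] with m hm
    have : 1 / (m : ℝ) ≤ 1 / (N + 1) := by
      gcongr
      exact_mod_cast hm
    linarith [sub_inv_le_partialDensity_densitySet h0 hαβ h1 (by omega : 1 ≤ m)]
  · linarith [partialDensity_densitySet_le h0 hαβ h1 m]

end Density

/-- For every pair of reals `0 ≤ α ≤ β ≤ 1` there is a closed subgroup `U`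
of the Cantor group `E` whose lower box dimension is `α` and whose upper box dimension is `β`;
moreover `U` can be chosen with Hausdorff dimension `α` as well. -/
theorem exists_closed_subgroup_with_dims
    {X : Type*} [MetricSpace X] (φ : (ℕ → ZMod 2) → X)
    (hbij : Function.Bijective φ)
    (hdist : ∀ x y : ℕ → ZMod 2, dist (φ x) (φ y) = cantorDist x y)
    (α β : ℝ) (h0 : 0 ≤ α) (hαβ : α ≤ β) (h1 : β ≤ 1) :
    ∃ U : Set (ℕ → ZMod 2),
      (0 : ℕ → ZMod 2) ∈ U ∧
      (∀ x ∈ U, ∀ y ∈ U, x + y ∈ U) ∧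
      (∀ x ∈ U, -x ∈ U) ∧
      IsClosed (φ '' U) ∧
      lowerBoxDim (φ '' U) = α ∧
      upperBoxDim (φ '' U) = β ∧
      dimH (φ '' U) = ENNReal.ofReal α := by
  obtain ⟨R, hlow, hup⟩ := exists_liminf_limsup_partialDensity h0 hαβ h1
  refine ⟨UR R, (URSubgroup R).zero_mem, fun x hx y hy => (URSubgroup R).add_mem hx hy,
    fun x hx => (URSubgroup R).neg_mem hx, isClosed_image_UR hdist hbij.2 R, ?_, ?_, ?_⟩
  · rw [lowerBoxDim_image_UR hdist hbij.2, hlow]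
  · rw [upperBoxDim_image_UR hdist hbij.2, hup]
  · rw [dimH_image_UR hdist, hlow]

end CantorGroup
end
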